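/- Let g be proper, lsc, ρ-weakly convex with γρ < 1. Define the nonconvexity criterion NC(h) = sup_{x,y,λ∈[0,1]} h(λx + (1-λ)y) - λh(x) - (1-λ)h(y). Then NC(g^γ) ≤ NC(g). -/

import Mathlib

/-! Both criteria are suprema of convexity defects `h (t x + (1-t) y) - t h x - (1-t) h y`, and
the two families dominate each other, so in fact `NC (g^γ) = NC g`. If `u`, `v` are proximal
points of `x`, `y`, convexity of `‖·‖²` bounds the defect of `g^γ` at `(x, y, t)` by that of `g`
at `(u, v, t)`; proximal points exist because `γρ < 1` makes the proximal objective coercive.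
Conversely, weak convexity makes every point `m` the proximal point of `m + γ q` for a proximal
subgradient `q` at `m`, and translating `u`, `v` by `γ q`, where `m = t u + (1-t) v`, bounds the
defect of `g` at `(u, v, t)` by a defect of `g^γ`. -/

open scoped RealInnerProductSpace
open Set

/-- Nonconvexity criterion of a function. -/
noncomputable def NC {d : ℕ} (h : EuclideanSpace ℝ (Fin d) → ℝ) : ℝ :=
  sSup {c : ℝ | ∃ x y : EuclideanSpace ℝ (Fin d), ∃ t : ℝ, t ∈ Set.Icc (0 : ℝ) 1 ∧
    c = h (t • x + (1 - t) • y) - t * h x - (1 - t) * h y}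

open Metric

theorem ConvexOn.exists_subgradient {E : Type*} [SeminormedAddCommGroup E] [NormedSpace ℝ E]
    {f : E → ℝ} (hf : ConvexOn ℝ univ f) (hc : Continuous f) (y : E) :
    ∃ ℓ : StrongDual ℝ E, ∀ z, f y + ℓ (z - y) ≤ f z := by
  have hopen : IsOpen {p : E × ℝ | p.1 ∈ univ ∧ f p.1 < p.2} := by
    simpa only [mem_univ, true_and] using
      (isOpen_lt (hc.comp continuous_fst) continuous_snd : IsOpen {p : E × ℝ | f p.1 < p.2})
  obtain ⟨F, hF⟩ := geometric_hahn_banach_open_point hf.convex_strict_epigraph hopen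
    (x := (y, f y)) (by simp)
  set L := F.comp (.inl ℝ E ℝ)
  set c := F (0, 1)
  have hFL : ∀ z r, F (z, r) = L z + r * c := fun z r => by
    rw [show (z, r) = (z, 0) + r • ((0 : E), (1 : ℝ)) by simp, map_add, map_smul, smul_eq_mul]
    rfl
  have hsep : ∀ z r, f z < r → L z + r * c < L y + f y * c := fun z r hr => by
    simpa only [hFL] using hF (z, r) ⟨mem_univ z, hr⟩
  have hc : 0 < -c := by linarith [hsep y (f y + 1) (by linarith)]
  refine ⟨(-c)⁻¹ • L, fun z => ?_⟩
  have hL : L z - L y ≤ -c * (f z - f y) := le_of_forall_pos_lt_add fun ε hε => by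
    have hεc : ε / -c * c = -ε := by
      rw [div_neg, neg_mul, div_mul_cancel₀ _ (neg_ne_zero.1 hc.ne')]
    have := hsep z (f z + ε / -c) (by linarith [div_pos hε hc])
    rw [add_mul, hεc] at this
    linarith
  have hℓ : (-c)⁻¹ * (L z - L y) ≤ f z - f y := (inv_mul_le_iff₀ hc).2 hL
  show f y + (-c)⁻¹ • L (z - y) ≤ f z
  rw [smul_eq_mul, map_sub]
  linarith

section MoreauEnvelope

variable {E : Type*} [SeminormedAddCommGroup E]

noncomputable def moreauEnvelope (γ : ℝ) (g : E → ℝ) (x : E) : ℝ :=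
  ⨅ y, 1 / (2 * γ) * ‖x - y‖ ^ 2 + g y

def IsProxPoint (γ : ℝ) (g : E → ℝ) (x p : E) : Prop :=
  ∀ z, 1 / (2 * γ) * ‖x - p‖ ^ 2 + g p ≤ 1 / (2 * γ) * ‖x - z‖ ^ 2 + g z

theorem IsProxPoint.moreauEnvelope_eq {γ : ℝ} {g : E → ℝ} {x p : E} (hp : IsProxPoint γ g x p) :
    moreauEnvelope γ g x = 1 / (2 * γ) * ‖x - p‖ ^ 2 + g p :=
  le_antisymm (ciInf_le ⟨_, forall_mem_range.2 hp⟩ p) (le_ciInf hp)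

variable [NormedSpace ℝ E]

def convexityDefect (h : E → ℝ) (x y : E) (t : ℝ) : ℝ :=
  h (t • x + (1 - t) • y) - t * h x - (1 - t) * h y

theorem convexityDefect_moreauEnvelope_le {γ : ℝ} (hγ : 0 < γ) {g : E → ℝ}
    (henv : ∀ x y, moreauEnvelope γ g x ≤ 1 / (2 * γ) * ‖x - y‖ ^ 2 + g y)
    {x y u v : E} (hu : IsProxPoint γ g x u) (hv : IsProxPoint γ g y v) {t : ℝ}
    (ht : t ∈ Icc (0 : ℝ) 1) :
    convexityDefect (moreauEnvelope γ g) x y t ≤ convexityDefect g u v t := by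
  have hsq : ‖t • (x - u) + (1 - t) • (y - v)‖ ^ 2 ≤ t * ‖x - u‖ ^ 2 + (1 - t) * ‖y - v‖ ^ 2 :=
    (convexOn_univ_norm.pow (fun _ _ => norm_nonneg _) 2).2 (mem_univ _) (mem_univ _) ht.1
      (sub_nonneg.2 ht.2) (by ring)
  have hmid := henv (t • x + (1 - t) • y) (t • u + (1 - t) • v)
  rw [show t • x + (1 - t) • y - (t • u + (1 - t) • v) = t • (x - u) + (1 - t) • (y - v) by
    module] at hmid
  have hc : 0 ≤ 1 / (2 * γ) := by positivity
  unfold convexityDefect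
  rw [hu.moreauEnvelope_eq, hv.moreauEnvelope_eq]
  linarith [mul_le_mul_of_nonneg_left hsq hc]

theorem convexityDefect_le_moreauEnvelope {γ : ℝ} {g : E → ℝ}
    (henv : ∀ x y, moreauEnvelope γ g x ≤ 1 / (2 * γ) * ‖x - y‖ ^ 2 + g y)
    {u v w : E} {t : ℝ} (hw : IsProxPoint γ g (t • u + (1 - t) • v + w) (t • u + (1 - t) • v))
    (ht : t ∈ Icc (0 : ℝ) 1) :
    convexityDefect g u v t ≤ convexityDefect (moreauEnvelope γ g) (u + w) (v + w) t := by
  have hu := henv (u + w) u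
  have hv := henv (v + w) v
  rw [add_sub_cancel_left] at hu hv
  unfold convexityDefect
  rw [show t • (u + w) + (1 - t) • (v + w) = t • u + (1 - t) • v + w by module,
    hw.moreauEnvelope_eq, add_sub_cancel_left]
  linarith [mul_le_mul_of_nonneg_left hu ht.1, mul_le_mul_of_nonneg_left hv (sub_nonneg.2 ht.2)]

end MoreauEnvelope

def WeaklyConvex {E : Type*} [SeminormedAddCommGroup E] [Module ℝ E] (ρ : ℝ) (g : E → ℝ) :
    Prop :=
  ConvexOn ℝ univ fun z => g z + ρ / 2 * ‖z‖ ^ 2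

namespace WeaklyConvex

variable {E : Type*} [NormedAddCommGroup E] [InnerProductSpace ℝ E] [FiniteDimensional ℝ E]
  {ρ γ : ℝ} {g : E → ℝ}

theorem continuous (hg : WeaklyConvex ρ g) : Continuous g := by
  have h := continuousOn_univ.1 (ConvexOn.continuousOn isOpen_univ hg)
  exact (h.sub (by fun_prop : Continuous fun z : E => ρ / 2 * ‖z‖ ^ 2)).congr fun z => by simp

theorem exists_proximal_subgradient (hg : WeaklyConvex ρ g) (y : E) :
    ∃ q : E, ∀ z, g y + ⟪q, z - y⟫ - ρ / 2 * ‖z - y‖ ^ 2 ≤ g z := by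
  have := FiniteDimensional.complete ℝ E
  obtain ⟨ℓ, hℓ⟩ := ConvexOn.exists_subgradient hg
    (hg.continuous.add (by fun_prop : Continuous fun z : E => ρ / 2 * ‖z‖ ^ 2)) y
  refine ⟨(InnerProductSpace.toDual ℝ E).symm ℓ - ρ • y, fun z => ?_⟩
  have hz : ‖z‖ ^ 2 = ‖y‖ ^ 2 + 2 * ⟪y, z - y⟫ + ‖z - y‖ ^ 2 := by
    rw [← norm_add_sq_real, add_sub_cancel]
  have hℓz := hℓ z
  rw [hz] at hℓz
  rw [inner_sub_left, InnerProductSpace.toDual_symm_apply, real_inner_smul_left]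
  linarith

theorem exists_isProxPoint (hg : WeaklyConvex ρ g) (hγ : 0 < γ) (hγρ : γ * ρ < 1) (x : E) :
    ∃ p, IsProxPoint γ g x p := by
  obtain ⟨q, hq⟩ := hg.exists_proximal_subgradient x
  set μ := 1 / (2 * γ) - ρ / 2 with hμ_def
  have hμ : 0 < μ := by
    rw [hμ_def, show 1 / (2 * γ) - ρ / 2 = (1 - γ * ρ) / (2 * γ) by field_simp]
    exact div_pos (by linarith) (by positivity)
  have hgc := hg.continuous
  refine Continuous.exists_forall_le' (by fun_prop) x ?_
  -- for `‖z - x‖ ≥ ‖q‖ / μ` the objective is `≥ g x + μ ‖z - x‖² - ‖q‖ ‖z - x‖ ≥ g x`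
  filter_upwards [(isCompact_closedBall x (‖q‖ / μ)).compl_mem_cocompact] with z hz
  rw [mem_compl_iff, mem_closedBall, not_le, dist_eq_norm, div_lt_iff₀ hμ] at hz
  have hqz : -(‖q‖ * ‖z - x‖) ≤ ⟪q, z - x⟫ := neg_le_of_abs_le (abs_real_inner_le_norm q _)
  rw [sub_self, norm_zero, norm_sub_rev]
  nlinarith [hq z, norm_nonneg (z - x)]

theorem isProxPoint_surjective (hg : WeaklyConvex ρ g) (hγ : 0 < γ) (hγρ : γ * ρ ≤ 1) (p : E) :
    ∃ x, IsProxPoint γ g x p := by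
  obtain ⟨q, hq⟩ := hg.exists_proximal_subgradient p
  refine ⟨p + γ • q, fun z => ?_⟩
  have hxz : ‖p + γ • q - z‖ ^ 2 = γ ^ 2 * ‖q‖ ^ 2 - 2 * γ * ⟪q, z - p⟫ + ‖z - p‖ ^ 2 := by
    rw [show p + γ • q - z = γ • q - (z - p) by abel, norm_sub_sq_real, norm_smul,
      real_inner_smul_left, Real.norm_eq_abs, mul_pow, sq_abs]
    ring
  have hc : 1 / (2 * γ) * (2 * γ * ⟪q, z - p⟫) = ⟪q, z - p⟫ := by field_simp
  have hρ : ρ / 2 ≤ 1 / (2 * γ) := by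
    rw [div_le_div_iff₀ two_pos (by positivity)]
    linarith
  rw [add_sub_cancel_left, norm_smul, Real.norm_eq_abs, mul_pow, sq_abs, hxz]
  linarith [hq z, mul_le_mul_of_nonneg_right hρ (sq_nonneg ‖z - p‖)]

theorem moreauEnvelope_le (hg : WeaklyConvex ρ g) (hγ : 0 < γ) (hγρ : γ * ρ < 1) (x y : E) :
    moreauEnvelope γ g x ≤ 1 / (2 * γ) * ‖x - y‖ ^ 2 + g y := by
  obtain ⟨p, hp⟩ := hg.exists_isProxPoint hγ hγρ x
  exact hp.moreauEnvelope_eq ▸ hp y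

end WeaklyConvex

theorem NC_moreauEnvelope_eq {d : ℕ} {g : EuclideanSpace ℝ (Fin d) → ℝ} {ρ γ : ℝ}
    (hg : WeaklyConvex ρ g) (hγ : 0 < γ) (hγρ : γ * ρ < 1) :
    NC (moreauEnvelope γ g) = NC g := by
  have henv := hg.moreauEnvelope_le hγ hγρ
  -- mutual domination also settles the unbounded case, where both `sSup`s are the junk value `0`
  refine csSup_eq_csSup_of_forall_exists_le ?_ ?_
  · rintro _ ⟨x, y, t, ht, rfl⟩
    obtain ⟨u, hu⟩ := hg.exists_isProxPoint hγ hγρ x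
    obtain ⟨v, hv⟩ := hg.exists_isProxPoint hγ hγρ y
    exact ⟨_, ⟨u, v, t, ht, rfl⟩, convexityDefect_moreauEnvelope_le hγ henv hu hv ht⟩
  · rintro _ ⟨u, v, t, ht, rfl⟩
    obtain ⟨x, hx⟩ := hg.isProxPoint_surjective hγ hγρ.le (t • u + (1 - t) • v)
    refine ⟨_, ⟨_, _, t, ht, rfl⟩,
      convexityDefect_le_moreauEnvelope henv (w := x - (t • u + (1 - t) • v)) ?_ ht⟩
    rwa [add_sub_cancel]

theorem NC_moreau_envelope_le_general {d : ℕ}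
    (g : EuclideanSpace ℝ (Fin d) → ℝ) (ρ γ : ℝ) (hγ : 0 < γ) (hγρ : γ * ρ < 1)
    (hconv : ConvexOn ℝ Set.univ (fun z => g z + ρ / 2 * ‖z‖ ^ 2)) :
    NC (fun x => ⨅ y, (1 / (2 * γ)) * ‖x - y‖ ^ 2 + g y) ≤ NC g :=
  (NC_moreauEnvelope_eq hconv hγ hγρ).le

theorem NC_moreau_envelope_le {d : ℕ}
    (g : EuclideanSpace ℝ (Fin d) → ℝ) (ρ γ : ℝ) (hγ : 0 < γ) (hγρ : γ * ρ < 1)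
    (hlsc : LowerSemicontinuous g)
    (hconv : ConvexOn ℝ Set.univ (fun z => g z + ρ / 2 * ‖z‖ ^ 2)) :
    NC (fun x => ⨅ y, (1 / (2 * γ)) * ‖x - y‖ ^ 2 + g y) ≤ NC g :=
  NC_moreau_envelope_le_general g ρ γ hγ hγρ hconv
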